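/- arXiv:2509.11362 — 3 statements merged into one kernel-verified Lean document; each statement's English description precedes it below -/
import Mathlib

section
/- Let n ≥ 2 and let i, j ∈ Fin n with i ≠ j. Let f, g : (Fin n → ℝ) → ℝ be twice continuously differentiable and everywhere strictly positive functions such that f does not depend on the i-th coordinate (f (Function.update z i t) = f z for all z and all t ∈ ℝ) and g does not depend on the j-th coordinate (g (Function.update z j t) = g z for all z and all t ∈ ℝ). Let p(z) := f(z)·g(z). Then the iterated partial derivative of log ∘ p, first in the i-th coordinate direction and then in the j-th coordinate direction, vanishes identically: for every z, ∂/∂z_j ( ∂/∂z_i (log p) )(z) = 0. -/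
open Real

/-- Lin (1997): if the positive density factorizes as `p = f * g` with `f` free of the
`i`-th coordinate and `g` free of the `j`-th coordinate, then the mixed second partial
derivative of `log p` in directions `i` and `j` vanishes identically. -/
theorem stmt2 {n : ℕ} (hn : 2 ≤ n) (i j : Fin n) (hij : i ≠ j)
    (f g : (Fin n → ℝ) → ℝ)
    (hf : ContDiff ℝ 2 f) (hg : ContDiff ℝ 2 g)
    (hfpos : ∀ z, 0 < f z) (hgpos : ∀ z, 0 < g z)
    (hfi : ∀ z t, f (Function.update z i t) = f z)
    (hgj : ∀ z t, g (Function.update z j t) = g z) :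
    ∀ z : Fin n → ℝ,
      fderiv ℝ (fun w => fderiv ℝ (fun u => Real.log (f u * g u)) w (Pi.single i 1))
        z (Pi.single j 1) = 0 := by
  intro z
  -- translation along a coordinate is update
  have key : ∀ (k : Fin n) (w : Fin n → ℝ) (t : ℝ),
      w + t • (Pi.single k 1 : Fin n → ℝ) = Function.update w k (w k + t) := by
    intro k w t
    funext m
    by_cases hm : m = k
    · subst hm; simp
    · simp [hm, Function.update_of_ne hm]
  have hfdiff : Differentiable ℝ f := hf.differentiable (by norm_num)
  have hgdiff : Differentiable ℝ g := hg.differentiable (by norm_num)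
  set F : (Fin n → ℝ) → ℝ := fun u => Real.log (f u) with hF
  set G : (Fin n → ℝ) → ℝ := fun u => Real.log (g u) with hG
  have hFdiff : Differentiable ℝ F := fun w =>
    (Real.differentiableAt_log (hfpos w).ne').comp w (hfdiff w)
  have hGdiff : Differentiable ℝ G := fun w =>
    (Real.differentiableAt_log (hgpos w).ne').comp w (hgdiff w)
  have hLG : ∀ (w : Fin n → ℝ) (t : ℝ), G (w + t • (Pi.single j 1 : Fin n → ℝ)) = G w := by
    intro w t
    simp only [hG, key j w t, hgj]
  have hLF : ∀ (w : Fin n → ℝ) (t : ℝ), F (w + t • (Pi.single i 1 : Fin n → ℝ)) = F w := by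
    intro w t
    simp only [hF, key i w t, hfi]
  -- the log splits
  have hsplit : (fun u => Real.log (f u * g u)) = fun u => F u + G u := by
    funext u
    exact Real.log_mul (hfpos u).ne' (hgpos u).ne'
  -- inner derivative equals fderiv of G in direction i
  have hinner : ∀ w, fderiv ℝ (fun u => Real.log (f u * g u)) w (Pi.single i 1)
      = fderiv ℝ G w (Pi.single i 1) := by
    intro w
    rw [hsplit, fderiv_fun_add (hFdiff w) (hGdiff w)]
    have hF0 : fderiv ℝ F w (Pi.single i 1) = 0 := by
      rw [← (hFdiff w).lineDeriv_eq_fderiv]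
      have : (fun t : ℝ => F (w + t • (Pi.single i 1 : Fin n → ℝ))) = fun _ => F w := by
        funext t; exact hLF w t
      simp [lineDeriv, this]
    simp [hF0]
  -- fderiv G is invariant along e_j
  have hGfderiv : ∀ s : ℝ, fderiv ℝ G (z + s • (Pi.single j 1 : Fin n → ℝ)) = fderiv ℝ G z := by
    intro s
    set c := s • (Pi.single j 1 : Fin n → ℝ)
    have h1 : HasFDerivAt (fun u => G (u + c)) (fderiv ℝ G (z + c)) z := by
      have := (hGdiff (z + c)).hasFDerivAt.comp z
        ((hasFDerivAt_id z).add_const c)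
      exact this
    have h2 : (fun u => G (u + c)) = G := by
      funext u; exact hLG u s
    rw [h2] at h1
    exact (h1.fderiv).symm
  -- now the outer function is constant along e_j
  set h : (Fin n → ℝ) → ℝ :=
    fun w => fderiv ℝ (fun u => Real.log (f u * g u)) w (Pi.single i 1) with hh
  have hconst : ∀ t : ℝ, h (z + t • (Pi.single j 1 : Fin n → ℝ)) = h z := by
    intro t
    simp only [hh, hinner, hGfderiv t]
  by_cases hd : DifferentiableAt ℝ h z
  · rw [← hd.lineDeriv_eq_fderiv]
    have : (fun t : ℝ => h (z + t • (Pi.single j 1 : Fin n → ℝ))) = fun _ => h z := by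
      funext t; exact hconst t
    simp [lineDeriv, this]
  · rw [fderiv_zero_of_not_differentiableAt hd]
    rfl
end

section
/- Let I be a type of coordinate indices with a block assignment β : I → M into modalities, and let (E i)_{i∈I} be a family of types, each having at least two elements. Let F : (∀ i, E i) → (∀ i, E i) satisfy: (a) [block structure] for every i, if z and z' agree on all coordinates j with β j = β i, then (F z) i = (F z') i; and (b) [component-wise structure] there exist a map σ : I → I and, for each i, a bijection ψ_i : E (σ i) ≃ E i such that (F z) i = ψ_i (z (σ i)) for all z. Then β (σ i) = β i for every i; that is, the coordinate reassignment σ maps each modality block into itself. -/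
/-!
The `i`-th output coordinate is an injective function of the single input coordinate `σ i`,
so it genuinely depends on `σ i`: changing only that coordinate (possible since `E (σ i)` has
two elements) changes the output. Block-wise structure says the output depends only on the
coordinates in the block of `i`, so `σ i` must lie in that block.
-/

open Function

section

variable {ι β γ : Type*} {α : ι → Type*}

lemma DependsOn.of_comp {f : (Π i, α i) → β} {g : β → γ} {s : Set ι} (hg : Injective g)
    (h : DependsOn (g ∘ f) s) : DependsOn f s :=
  fun _ _ hxy ↦ hg (h hxy)

lemma mem_of_dependsOn_eval [∀ i, Nonempty (α i)] {k : ι} [Nontrivial (α k)] {s : Set ι}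
    (h : DependsOn (fun x : Π i, α i ↦ x k) s) : k ∈ s := by
  classical
  by_contra hk
  let x : Π i, α i := fun _ ↦ Classical.arbitrary _
  obtain ⟨b, hb⟩ := exists_ne (x k)
  have hagree : ∀ i ∈ s, x i = update x k b i := fun i hi ↦
    (update_of_ne (ne_of_mem_of_not_mem hi hk) b x).symm
  exact hb (by simpa using (h hagree).symm)

end

/-- Proposition (Resolving Block-Wise Permutation): if the indeterminacy map acts
block-wise on modalities and each component is an invertible function of a single
coordinate, then the coordinate reassignment maps each modality block into itself. -/
theorem stmt5 {I M : Type*} (β : I → M) {E : I → Type*} [∀ i, Nontrivial (E i)]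
    (F : (∀ i, E i) → (∀ i, E i))
    (hblock : ∀ (i : I) (z z' : ∀ i, E i),
      (∀ j, β j = β i → z j = z' j) → F z i = F z' i)
    (σ : I → I) (ψ : ∀ i, E (σ i) ≃ E i)
    (hcomp : ∀ (z : ∀ i, E i) (i : I), F z i = ψ i (z (σ i))) :
    ∀ i, β (σ i) = β i := by
  intro i
  have hdep : DependsOn (ψ i ∘ fun z : ∀ j, E j ↦ z (σ i)) {j | β j = β i} := by
    intro z z' hzz'
    simpa only [comp_apply, hcomp] using hblock i z z' hzz'
  exact mem_of_dependsOn_eval (s := {j | β j = β i}) (hdep.of_comp (ψ i).injective)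
end

section
/- Let (Ω, F, P) be a probability space with Ω a standard Borel space. Let Z, E₁, E₂, X₁, X₂ be measurable random variables into measurable spaces. Assume there exist measurable maps g₁, g₂, ĝ₁, ĝ₂ such that X₁ = g₁ ∘ ⟨Z, E₁⟩, X₂ = g₂ ∘ ⟨Z, E₂⟩, E₁ = ĝ₁ ∘ ⟨Z, X₁⟩, and E₂ = ĝ₂ ∘ ⟨Z, X₂⟩ hold everywhere on Ω. Then X₁ and X₂ are conditionally independent given σ(Z) if and only if E₁ and E₂ are conditionally independent given σ(Z). -/
/-!
Conditioning on `σ(Z)` cannot distinguish `f` from `(Z, f)`: on a set of `σ(Z)` the indicator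
pulls out of the conditional expectation, so conditional independence of `σ(f)` and `σ(g)`
given `σ(Z)` passes to `σ(Z) ⊔ σ(f)` and `σ(g)`. Each noise term is a measurable function of
`Z` and its measurement and vice versa, so each conditional independence implies the other.
-/

open MeasureTheory ProbabilityTheory

namespace MeasurableSpace

variable {Ω : Type*} (m₁ m₂ : MeasurableSpace Ω)

theorem isPiSystem_image2_inter_measurableSet :
    IsPiSystem (Set.image2 (· ∩ ·) {s | MeasurableSet[m₁] s} {t | MeasurableSet[m₂] t}) := by
  rintro _ ⟨s, hs, t, ht, rfl⟩ _ ⟨s', hs', t', ht', rfl⟩ -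
  exact ⟨s ∩ s', hs.inter hs', t ∩ t', ht.inter ht', Set.inter_inter_inter_comm s s' t t'⟩

theorem sup_eq_generateFrom_image2_inter :
    m₁ ⊔ m₂ = generateFrom (Set.image2 (· ∩ ·) {s | MeasurableSet[m₁] s}
      {t | MeasurableSet[m₂] t}) := by
  refine le_antisymm (sup_le (fun s hs => ?_) (fun t ht => ?_)) (generateFrom_le ?_)
  · exact measurableSet_generateFrom ⟨s, hs, Set.univ, MeasurableSet.univ, Set.inter_univ s⟩
  · exact measurableSet_generateFrom ⟨Set.univ, MeasurableSet.univ, t, ht, Set.univ_inter t⟩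
  · rintro _ ⟨s, hs, t, ht, rfl⟩
    exact (le_sup_left (b := m₂) s hs).inter (le_sup_right (a := m₁) t ht)

end MeasurableSpace

namespace ProbabilityTheory

variable {Ω : Type*} {m' : MeasurableSpace Ω} [mΩ : MeasurableSpace Ω] {μ : Measure Ω}

theorem condExp_inter_ae_eq_indicator_condExp {s t : Set Ω} (hs : MeasurableSet[m'] s)
    (ht : MeasurableSet t) [IsFiniteMeasure μ] :
    μ⟦s ∩ t | m'⟧ =ᵐ[μ] s.indicator (μ⟦t | m'⟧) := by
  rw [← Set.indicator_indicator]
  exact condExp_indicator ((integrable_const (1 : ℝ)).indicator ht) hs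

variable [StandardBorelSpace Ω] {hm' : m' ≤ mΩ} [IsFiniteMeasure μ]

theorem CondIndep.sup_conditioning_left {m₁ m₂ : MeasurableSpace Ω}
    (h : CondIndep m' m₁ m₂ hm' μ) (h₁ : m₁ ≤ mΩ) (h₂ : m₂ ≤ mΩ) :
    CondIndep m' (m' ⊔ m₁) m₂ hm' μ := by
  have hp_meas : ∀ u ∈ Set.image2 (· ∩ ·) {s | MeasurableSet[m'] s} {t | MeasurableSet[m₁] t},
      MeasurableSet[mΩ] u := by
    rintro _ ⟨s, hs, t, ht, rfl⟩
    exact (hm' s hs).inter (h₁ t ht)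
  refine CondIndepSets.condIndep (sup_le hm' h₁) h₂
    (MeasurableSpace.isPiSystem_image2_inter_measurableSet m' m₁)
    (@MeasurableSpace.isPiSystem_measurableSet Ω m₂)
    (MeasurableSpace.sup_eq_generateFrom_image2_inter m' m₁)
    MeasurableSpace.generateFrom_measurableSet.symm ?_
  rw [condIndepSets_iff m' hm' _ {u | MeasurableSet[m₂] u} hp_meas fun u hu => h₂ u hu]
  rintro _ u ⟨s, hs, t, ht, rfl⟩ hu
  have htu := (condIndep_iff m' m₁ m₂ hm' h₁ h₂ μ).mp h t u ht hu
  have ht' : MeasurableSet[mΩ] t := h₁ t ht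
  have htu' : MeasurableSet[mΩ] (t ∩ u) := ht'.inter (h₂ u hu)
  calc μ⟦s ∩ t ∩ u | m'⟧
      =ᵐ[μ] s.indicator (μ⟦t ∩ u | m'⟧) := by
        rw [Set.inter_assoc]
        exact condExp_inter_ae_eq_indicator_condExp (mΩ := mΩ) hs htu'
    _ =ᵐ[μ] s.indicator (μ⟦t | m'⟧ * μ⟦u | m'⟧) := by
        filter_upwards [htu] with ω hω
        by_cases hωs : ω ∈ s <;> simp [hωs, hω]
    _ = s.indicator (μ⟦t | m'⟧) * μ⟦u | m'⟧ :=
        funext fun ω => Set.indicator_mul_left s _ _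
    _ =ᵐ[μ] μ⟦s ∩ t | m'⟧ * μ⟦u | m'⟧ := by
        filter_upwards [condExp_inter_ae_eq_indicator_condExp (mΩ := mΩ) (μ := μ) hs ht'] with ω hω
        rw [Pi.mul_apply, Pi.mul_apply, hω]

theorem CondIndepFun.of_eq_comp_prodMk_left {𝒵 α β γ : Type*} [MeasurableSpace 𝒵]
    [MeasurableSpace α] [MeasurableSpace β] [MeasurableSpace γ]
    {Z : Ω → 𝒵} (hZ : Measurable Z) {f : Ω → α} {g : Ω → β} {F : Ω → γ} {φ : 𝒵 × α → γ}
    (h : CondIndepFun (MeasurableSpace.comap Z inferInstance) hZ.comap_le f g μ)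
    (hf : Measurable f) (hg : Measurable g) (hφ : Measurable φ)
    (hF : ∀ ω, F ω = φ (Z ω, f ω)) :
    CondIndepFun (MeasurableSpace.comap Z inferInstance) hZ.comap_le F g μ := by
  rw [condIndepFun_iff_condIndep] at h ⊢
  have hF_le : MeasurableSpace.comap F inferInstance
      ≤ MeasurableSpace.comap Z inferInstance ⊔ MeasurableSpace.comap f inferInstance := by
    rw [show F = φ ∘ fun ω => (Z ω, f ω) from funext hF, ← MeasurableSpace.comap_comp,
      ← MeasurableSpace.comap_prodMk]
    exact MeasurableSpace.comap_mono hφ.comap_le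
  exact condIndep_of_condIndep_of_le_left (h.sup_conditioning_left hf.comap_le hg.comap_le) hF_le

theorem CondIndepFun.of_eq_comp_prodMk {𝒵 α β γ δ : Type*} [MeasurableSpace 𝒵]
    [MeasurableSpace α] [MeasurableSpace β] [MeasurableSpace γ] [MeasurableSpace δ]
    {Z : Ω → 𝒵} (hZ : Measurable Z) {f : Ω → α} {g : Ω → β} {F : Ω → γ} {G : Ω → δ}
    {φ : 𝒵 × α → γ} {ψ : 𝒵 × β → δ}
    (h : CondIndepFun (MeasurableSpace.comap Z inferInstance) hZ.comap_le f g μ)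
    (hf : Measurable f) (hg : Measurable g) (hφ : Measurable φ) (hψ : Measurable ψ)
    (hF : ∀ ω, F ω = φ (Z ω, f ω)) (hG : ∀ ω, G ω = ψ (Z ω, g ω)) :
    CondIndepFun (MeasurableSpace.comap Z inferInstance) hZ.comap_le F G μ := by
  have hF_meas : Measurable F := funext hF ▸ hφ.comp (hZ.prodMk hf)
  have hFg := h.of_eq_comp_prodMk_left hZ hf hg hφ hF
  exact (hFg.symm.of_eq_comp_prodMk_left hZ hg hF_meas hψ hG).symm

end ProbabilityTheory

/-- Proposition (Conditional Independence Condition): for measurements generated from the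
latent variables and noise terms through mechanisms invertible in the noise given the
latents, the measurements are conditionally independent given the latents iff the noise
terms are. -/
theorem stmt8 {Ω 𝒵 ℰ₁ ℰ₂ 𝒳₁ 𝒳₂ : Type*}
    [mΩ : MeasurableSpace Ω] [StandardBorelSpace Ω]
    [MeasurableSpace 𝒵] [MeasurableSpace ℰ₁] [MeasurableSpace ℰ₂]
    [MeasurableSpace 𝒳₁] [MeasurableSpace 𝒳₂]
    {μ : Measure Ω} [IsProbabilityMeasure μ]
    {Z : Ω → 𝒵} {E₁ : Ω → ℰ₁} {E₂ : Ω → ℰ₂} {X₁ : Ω → 𝒳₁} {X₂ : Ω → 𝒳₂}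
    (hZ : Measurable Z) (hE₁ : Measurable E₁) (hE₂ : Measurable E₂)
    (hX₁ : Measurable X₁) (hX₂ : Measurable X₂)
    (g₁ : 𝒵 × ℰ₁ → 𝒳₁) (g₂ : 𝒵 × ℰ₂ → 𝒳₂)
    (gInv₁ : 𝒵 × 𝒳₁ → ℰ₁) (gInv₂ : 𝒵 × 𝒳₂ → ℰ₂)
    (hg₁ : Measurable g₁) (hg₂ : Measurable g₂)
    (hgInv₁ : Measurable gInv₁) (hgInv₂ : Measurable gInv₂)
    (hX₁eq : ∀ ω, X₁ ω = g₁ (Z ω, E₁ ω)) (hX₂eq : ∀ ω, X₂ ω = g₂ (Z ω, E₂ ω))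
    (hE₁eq : ∀ ω, E₁ ω = gInv₁ (Z ω, X₁ ω)) (hE₂eq : ∀ ω, E₂ ω = gInv₂ (Z ω, X₂ ω)) :
    CondIndepFun (MeasurableSpace.comap Z inferInstance) hZ.comap_le X₁ X₂ μ ↔
    CondIndepFun (MeasurableSpace.comap Z inferInstance) hZ.comap_le E₁ E₂ μ :=
  ⟨fun h => h.of_eq_comp_prodMk hZ hX₁ hX₂ hgInv₁ hgInv₂ hE₁eq hE₂eq,
    fun h => h.of_eq_comp_prodMk hZ hE₁ hE₂ hg₁ hg₂ hX₁eq hX₂eq⟩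
end
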